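/- arXiv:2506.08211 — 7 statements merged into one kernel-verified Lean document; each statement's English description precedes it below -/
import Mathlib

section
/- Let q ∈ ℕ, θ ∈ (Fin q → ℝ), φ : ℝ → (Fin q → ℝ), and set y(t) := φ(t) ⬝ᵥ θ. Let F : ℝ → Matrix (Fin q) (Fin q) ℝ be invertible-valued with, for every t ∈ ℝ, derivative −F(t)·Φ(t)·F(t) at t, and let θ̂ : ℝ → (Fin q → ℝ) have, for every t ∈ ℝ, derivative (y(t) − φ(t) ⬝ᵥ θ̂(t)) • (F(t) *ᵥ φ(t)) at t. Then the map t ↦ (F(t))⁻¹ *ᵥ (θ̂(t) − θ) has derivative 0 at every t ∈ ℝ. -/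
open Matrix MeasureTheory

section Aux
attribute [local instance] Matrix.linftyOpNormedRing Matrix.linftyOpNormedAlgebra

noncomputable def idCLM (q : ℕ) : (Fin q → Fin q → ℝ) →L[ℝ] Matrix (Fin q) (Fin q) ℝ :=
  LinearMap.toContinuousLinearMap (LinearMap.id (R := ℝ) (M := Matrix (Fin q) (Fin q) ℝ))

noncomputable def entryCLM (q : ℕ) (i j : Fin q) : Matrix (Fin q) (Fin q) ℝ →L[ℝ] ℝ :=
  LinearMap.toContinuousLinearMap
    ((LinearMap.proj j).comp (LinearMap.proj (R := ℝ) (φ := fun _ : Fin q => Fin q → ℝ) i))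

theorem entry_inv_deriv {q : ℕ} (F : ℝ → Matrix (Fin q) (Fin q) ℝ)
    (F' : Matrix (Fin q) (Fin q) ℝ) (t : ℝ) (hU : ∀ s, IsUnit (F s))
    (hF : ∀ i j, HasDerivAt (fun s => F s i j) (F' i j) t) (i j : Fin q) :
    HasDerivAt (fun s => (F s)⁻¹ i j) ((-((F t)⁻¹ * F' * (F t)⁻¹)) i j) t := by
  have hFlin : HasDerivAt F F' t := by
    have h1 : HasDerivAt (fun s => (fun i j => F s i j)) (fun i j => F' i j) t := by
      rw [hasDerivAt_pi]; intro i
      rw [hasDerivAt_pi]; intro j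
      exact hF i j
    exact (idCLM q).hasFDerivAt.comp_hasDerivAt t h1
  set u := (hU t).unit with hu
  have huc : (u : Matrix (Fin q) (Fin q) ℝ) = F t := (hU t).unit_spec
  have h2 : HasDerivAt (fun s => Ring.inverse (F s))
      ((-ContinuousLinearMap.mulLeftRight ℝ _ (↑u⁻¹) (↑u⁻¹)) F') t := by
    have hfd := hasFDerivAt_ringInverse (𝕜 := ℝ) u
    rw [huc] at hfd
    exact hfd.comp_hasDerivAt t hFlin
  have hinv : ((u⁻¹ : _) : Matrix (Fin q) (Fin q) ℝ) = (F t)⁻¹ := by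
    rw [Matrix.nonsing_inv_eq_ringInverse, ← huc, Ring.inverse_unit]
  have h3 : HasDerivAt (fun s => (F s)⁻¹) (-((F t)⁻¹ * F' * (F t)⁻¹)) t := by
    have heq : (fun s => Ring.inverse (F s)) = fun s => (F s)⁻¹ := by
      funext s; rw [Matrix.nonsing_inv_eq_ringInverse]
    rw [heq] at h2
    convert h2 using 1
    simp [ContinuousLinearMap.mulLeftRight_apply, hinv, Matrix.mul_assoc]
  exact (entryCLM q i j).hasFDerivAt.comp_hasDerivAt t h3

end Aux

attribute [local instance] Matrix.normedAddCommGroup Matrix.normedSpace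

/-- For the unnormalized LS estimator without forgetting factor applied to the
linear regression equation `y(t) = φ(t)ᵀθ`, the quantity `F(t)⁻¹(θ̂(t) − θ)` is
constant: its derivative is zero everywhere. -/
theorem ls_inverse_covariance_times_error_deriv_zero
    (q : ℕ) (θ : Fin q → ℝ) (φ : ℝ → Fin q → ℝ)
    (y : ℝ → ℝ) (hy : ∀ t : ℝ, y t = φ t ⬝ᵥ θ)
    (F : ℝ → Matrix (Fin q) (Fin q) ℝ)
    (hFinv : ∀ t : ℝ, IsUnit (F t))
    (hF : ∀ t : ℝ, HasDerivAt F (-(F t * vecMulVec (φ t) (φ t) * F t)) t)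
    (θh : ℝ → Fin q → ℝ)
    (hθh : ∀ t : ℝ, HasDerivAt θh ((y t - φ t ⬝ᵥ θh t) • (F t *ᵥ φ t)) t) :
    ∀ t : ℝ, HasDerivAt (fun s => (F s)⁻¹ *ᵥ (θh s - θ)) 0 t := by
  intro t
  have hdet : IsUnit (F t).det := (Matrix.isUnit_iff_isUnit_det _).mp (hFinv t)
  -- entrywise derivatives of F
  have hFentry : ∀ i j, HasDerivAt (fun s => F s i j)
      ((-(F t * vecMulVec (φ t) (φ t) * F t)) i j) t := by
    intro i j
    have h1 := hasDerivAt_pi.mp (hF t) i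
    exact hasDerivAt_pi.mp h1 j
  -- entrywise derivatives of (F s)⁻¹
  have hinv : ∀ i j, HasDerivAt (fun s => (F s)⁻¹ i j)
      ((vecMulVec (φ t) (φ t)) i j) t := by
    intro i j
    have := entry_inv_deriv F (-(F t * vecMulVec (φ t) (φ t) * F t)) t hFinv hFentry i j
    convert this using 2
    rw [mul_neg, neg_mul, neg_neg]
    rw [show (F t)⁻¹ * (F t * vecMulVec (φ t) (φ t) * F t) * (F t)⁻¹
        = ((F t)⁻¹ * F t) * vecMulVec (φ t) (φ t) * (F t * (F t)⁻¹) by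
      simp only [Matrix.mul_assoc]]
    rw [Matrix.nonsing_inv_mul _ hdet, Matrix.mul_nonsing_inv _ hdet, Matrix.one_mul,
      Matrix.mul_one]
  have hθhe : ∀ j, HasDerivAt (fun s => θh s j)
      (((y t - φ t ⬝ᵥ θh t) • (F t *ᵥ φ t)) j) t := fun j => hasDerivAt_pi.mp (hθh t) j
  rw [hasDerivAt_pi]
  intro i
  have heq : (fun s => ((F s)⁻¹ *ᵥ (θh s - θ)) i)
      = fun s => ∑ j, (F s)⁻¹ i j * (θh s j - θ j) := by
    funext s; simp [Matrix.mulVec, dotProduct]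
  rw [heq]
  have hsum : HasDerivAt (fun s => ∑ j, (F s)⁻¹ i j * (θh s j - θ j))
      (∑ j, ((vecMulVec (φ t) (φ t)) i j * (θh t j - θ j)
        + (F t)⁻¹ i j * (((y t - φ t ⬝ᵥ θh t) • (F t *ᵥ φ t)) j))) t := by
    apply HasDerivAt.fun_sum
    intro j _
    exact (hinv i j).mul ((hθhe j).sub_const (θ j))
  have hzero : (∑ j, ((vecMulVec (φ t) (φ t)) i j * (θh t j - θ j)
        + (F t)⁻¹ i j * (((y t - φ t ⬝ᵥ θh t) • (F t *ᵥ φ t)) j))) = 0 := by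
    rw [Finset.sum_add_distrib]
    have h1 : ∑ j, (vecMulVec (φ t) (φ t)) i j * (θh t j - θ j)
        = φ t i * (φ t ⬝ᵥ θh t - φ t ⬝ᵥ θ) := by
      simp only [Matrix.vecMulVec_apply, dotProduct, ← Finset.sum_sub_distrib,
        Finset.mul_sum, mul_sub]
      exact Finset.sum_congr rfl fun j _ => by ring
    have h2 : ∑ j, (F t)⁻¹ i j * (((y t - φ t ⬝ᵥ θh t) • (F t *ᵥ φ t)) j)
        = (y t - φ t ⬝ᵥ θh t) * φ t i := by
      have : ((F t)⁻¹ *ᵥ (F t *ᵥ φ t)) = φ t := by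
        rw [Matrix.mulVec_mulVec, Matrix.nonsing_inv_mul _ hdet, Matrix.one_mulVec]
      calc ∑ j, (F t)⁻¹ i j * (((y t - φ t ⬝ᵥ θh t) • (F t *ᵥ φ t)) j)
          = (y t - φ t ⬝ᵥ θh t) * ∑ j, (F t)⁻¹ i j * (F t *ᵥ φ t) j := by
            rw [Finset.mul_sum]; congr 1; funext j; simp [Pi.smul_apply]; ring
        _ = (y t - φ t ⬝ᵥ θh t) * ((F t)⁻¹ *ᵥ (F t *ᵥ φ t)) i := rfl
        _ = (y t - φ t ⬝ᵥ θh t) * φ t i := by rw [this]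
    rw [h1, h2, hy t]
    ring
  rw [hzero] at hsum
  simpa using hsum
end

section
/- Let q ∈ ℕ, θ ∈ (Fin q → ℝ), φ : ℝ → (Fin q → ℝ), and set y(t) := φ(t) ⬝ᵥ θ. Let F : ℝ → Matrix (Fin q) (Fin q) ℝ be invertible-valued with, for every t ∈ ℝ, derivative −F(t)·Φ(t)·F(t) at t, and let θ̂ : ℝ → (Fin q → ℝ) have, for every t ∈ ℝ, derivative (y(t) − φ(t) ⬝ᵥ θ̂(t)) • (F(t) *ᵥ φ(t)) at t. Then for every t ∈ ℝ, θ̂(t) − θ = (F(t) · (F(0))⁻¹) *ᵥ (θ̂(0) − θ). -/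
open Matrix MeasureTheory

attribute [local instance] Matrix.normedAddCommGroup Matrix.normedSpace

section Aux
variable {q : ℕ}

lemma hasDerivAt_matrix {F : ℝ → Matrix (Fin q) (Fin q) ℝ}
    {M : Matrix (Fin q) (Fin q) ℝ} {t : ℝ} :
    HasDerivAt F M t ↔ ∀ i j, HasDerivAt (fun s => F s i j) (M i j) t := by
  refine hasDerivAt_pi.trans ?_
  exact forall_congr' fun i => hasDerivAt_pi

lemma HasDerivAt.matMul {A B : ℝ → Matrix (Fin q) (Fin q) ℝ}
    {A' B' : Matrix (Fin q) (Fin q) ℝ} {t : ℝ}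
    (hA : HasDerivAt A A' t) (hB : HasDerivAt B B' t) :
    HasDerivAt (fun s => A s * B s) (A' * B t + A t * B') t := by
  rw [hasDerivAt_matrix] at hA hB ⊢
  intro i j
  simp only [Matrix.mul_apply, Matrix.add_apply, ← Finset.sum_add_distrib]
  exact HasDerivAt.fun_sum fun k _ => ((hA i k).mul (hB k j))

lemma HasDerivAt.matMulVec {A : ℝ → Matrix (Fin q) (Fin q) ℝ} {v : ℝ → Fin q → ℝ}
    {A' : Matrix (Fin q) (Fin q) ℝ} {v' : Fin q → ℝ} {t : ℝ}
    (hA : HasDerivAt A A' t) (hv : HasDerivAt v v' t) :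
    HasDerivAt (fun s => A s *ᵥ v s) (A' *ᵥ v t + A t *ᵥ v') t := by
  rw [hasDerivAt_matrix] at hA
  rw [hasDerivAt_pi] at hv ⊢
  intro i
  simp only [Matrix.mulVec, dotProduct, Pi.add_apply, ← Finset.sum_add_distrib]
  exact HasDerivAt.fun_sum fun k _ => ((hA i k).mul (hv k))

lemma differentiableAt_det {F : ℝ → Matrix (Fin q) (Fin q) ℝ} {t : ℝ}
    (h : ∀ i j, DifferentiableAt ℝ (fun s => F s i j) t) :
    DifferentiableAt ℝ (fun s => (F s).det) t := by
  simp only [Matrix.det_apply']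
  refine DifferentiableAt.fun_sum fun σ _ => DifferentiableAt.const_mul ?_ _
  exact DifferentiableAt.fun_finsetProd fun i _ => h (σ i) i

lemma hasDerivAt_inv_matrix {F : ℝ → Matrix (Fin q) (Fin q) ℝ}
    {F' : Matrix (Fin q) (Fin q) ℝ} {t : ℝ}
    (hFinv : ∀ s : ℝ, IsUnit (F s))
    (hF : HasDerivAt F F' t) :
    HasDerivAt (fun s => (F s)⁻¹) (-((F t)⁻¹ * F' * (F t)⁻¹)) t := by
  have hdet : ∀ s : ℝ, IsUnit (F s).det := fun s =>
    (Matrix.isUnit_iff_isUnit_det _).1 (hFinv s)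
  have hentry : ∀ i j, DifferentiableAt ℝ (fun s => F s i j) t := fun i j =>
    (hasDerivAt_matrix.1 hF i j).differentiableAt
  -- differentiability of the inverse, entrywise
  have hinv_diff : DifferentiableAt ℝ (fun s => (F s)⁻¹) t := by
    refine differentiableAt_pi.2 ?_
    intro i
    refine differentiableAt_pi.2 ?_
    intro j
    have : (fun s => (F s)⁻¹ i j)
        = fun s => ((F s).det)⁻¹ * (F s).adjugate i j := by
      funext s
      rw [Matrix.inv_def, Matrix.smul_apply, Ring.inverse_eq_inv, smul_eq_mul]
    rw [this]
    refine DifferentiableAt.mul (DifferentiableAt.inv (differentiableAt_det hentry)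
      (hdet t).ne_zero) ?_
    have : (fun s => (F s).adjugate i j)
        = fun s => ((F s).updateRow j (Pi.single i 1)).det := by
      funext s; rw [Matrix.adjugate_apply]
    rw [this]
    refine differentiableAt_det fun k l => ?_
    simp only [Matrix.updateRow_apply]
    by_cases hk : k = j
    · simp [hk]
    · simpa [hk] using hentry k l
  obtain ⟨D, hD⟩ : ∃ D, HasDerivAt (fun s => (F s)⁻¹) D t :=
    ⟨_, hinv_diff.hasDerivAt⟩
  have hone : HasDerivAt (fun s => F s * (F s)⁻¹) (F' * (F t)⁻¹ + F t * D) t :=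
    hF.matMul hD
  have hone' : HasDerivAt (fun s => F s * (F s)⁻¹) 0 t := by
    have : (fun s => F s * (F s)⁻¹) = fun _ => (1 : Matrix (Fin q) (Fin q) ℝ) := by
      funext s; exact Matrix.mul_nonsing_inv _ (hdet s)
    rw [this]; exact hasDerivAt_const _ _
  have hzero : F' * (F t)⁻¹ + F t * D = 0 := hone.unique hone'
  have hDval : D = -((F t)⁻¹ * F' * (F t)⁻¹) := by
    have h1 : F t * D = -(F' * (F t)⁻¹) := by
      rw [eq_neg_iff_add_eq_zero, add_comm]; exact hzero
    calc D = ((F t)⁻¹ * F t) * D := by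
            rw [Matrix.nonsing_inv_mul _ (hdet t), one_mul]
      _ = (F t)⁻¹ * (F t * D) := by rw [Matrix.mul_assoc]
      _ = -((F t)⁻¹ * F' * (F t)⁻¹) := by rw [h1, Matrix.mul_assoc]; simp [Matrix.mul_assoc]
  rwa [hDval] at hD

end Aux

/-- The parameter error of the unnormalized LS estimator without forgetting
factor satisfies `θ̃(t) = F(t)F(0)⁻¹θ̃(0)`. -/
theorem ls_error_formula
    (q : ℕ) (θ : Fin q → ℝ) (φ : ℝ → Fin q → ℝ)
    (y : ℝ → ℝ) (hy : ∀ t : ℝ, y t = φ t ⬝ᵥ θ)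
    (F : ℝ → Matrix (Fin q) (Fin q) ℝ)
    (hFinv : ∀ t : ℝ, IsUnit (F t))
    (hF : ∀ t : ℝ, HasDerivAt F (-(F t * vecMulVec (φ t) (φ t) * F t)) t)
    (θh : ℝ → Fin q → ℝ)
    (hθh : ∀ t : ℝ, HasDerivAt θh ((y t - φ t ⬝ᵥ θh t) • (F t *ᵥ φ t)) t) :
    ∀ t : ℝ, θh t - θ = (F t * (F 0)⁻¹) *ᵥ (θh 0 - θ) := by
  have hdet : ∀ s : ℝ, IsUnit (F s).det := fun s =>
    (Matrix.isUnit_iff_isUnit_det _).1 (hFinv s)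
  set v : ℝ → Fin q → ℝ := fun s => θh s - θ with hv
  have hv' : ∀ t : ℝ, HasDerivAt v (-(φ t ⬝ᵥ v t) • (F t *ᵥ φ t)) t := by
    intro t
    have := (hθh t).sub_const θ
    have hc : y t - φ t ⬝ᵥ θh t = -(φ t ⬝ᵥ v t) := by
      rw [hy t, hv]
      simp [dotProduct_sub]
    rwa [hc] at this
  -- derivative of the inverse
  have hFinv' : ∀ t : ℝ, HasDerivAt (fun s => (F s)⁻¹) (vecMulVec (φ t) (φ t)) t := by
    intro t
    have h := hasDerivAt_inv_matrix hFinv (hF t)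
    have : -((F t)⁻¹ * -(F t * vecMulVec (φ t) (φ t) * F t) * (F t)⁻¹)
        = vecMulVec (φ t) (φ t) := by
      rw [Matrix.mul_neg, Matrix.neg_mul, neg_neg]
      calc (F t)⁻¹ * (F t * vecMulVec (φ t) (φ t) * F t) * (F t)⁻¹
          = ((F t)⁻¹ * F t) * vecMulVec (φ t) (φ t) * (F t * (F t)⁻¹) := by
            simp only [Matrix.mul_assoc]
        _ = vecMulVec (φ t) (φ t) := by
            rw [Matrix.nonsing_inv_mul _ (hdet t), Matrix.mul_nonsing_inv _ (hdet t),
              one_mul, mul_one]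
    rwa [this] at h
  -- z is constant
  set z : ℝ → Fin q → ℝ := fun s => (F s)⁻¹ *ᵥ v s with hz
  have hz' : ∀ t : ℝ, HasDerivAt z 0 t := by
    intro t
    have h := (hFinv' t).matMulVec (hv' t)
    have heq : vecMulVec (φ t) (φ t) *ᵥ v t
        + (F t)⁻¹ *ᵥ (-(φ t ⬝ᵥ v t) • (F t *ᵥ φ t)) = 0 := by
      have h1 : vecMulVec (φ t) (φ t) *ᵥ v t = (φ t ⬝ᵥ v t) • φ t := by
        funext i
        simp only [Matrix.mulVec, Matrix.vecMulVec_apply, dotProduct, Pi.smul_apply,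
          smul_eq_mul, Finset.sum_mul]
        exact Finset.sum_congr rfl fun j _ => by ring
      have h2 : (F t)⁻¹ *ᵥ (-(φ t ⬝ᵥ v t) • (F t *ᵥ φ t))
          = -(φ t ⬝ᵥ v t) • φ t := by
        rw [Matrix.mulVec_smul, Matrix.mulVec_mulVec,
          Matrix.nonsing_inv_mul _ (hdet t), Matrix.one_mulVec]
      rw [h1, h2, neg_smul, add_neg_cancel]
    rwa [heq] at h
  have hconst : ∀ t : ℝ, z t = z 0 := by
    intro t
    refine is_const_of_deriv_eq_zero (fun s => (hz' s).differentiableAt) (fun s => ?_) t 0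
    exact (hz' s).deriv
  intro t
  have : F t *ᵥ z t = v t := by
    rw [hz]
    simp only
    rw [Matrix.mulVec_mulVec, Matrix.mul_nonsing_inv _ (hdet t), Matrix.one_mulVec]
  rw [show θh t - θ = v t from rfl, ← this, hconst t, hz]
  simp only
  rw [Matrix.mulVec_mulVec]
end

section
/- Let q ∈ ℕ and φ : ℝ → (Fin q → ℝ) be continuous. Let F : ℝ → Matrix (Fin q) (Fin q) ℝ be invertible-valued and such that the map t ↦ (F(t))⁻¹ has derivative Φ(t) at every t ∈ ℝ. Suppose there exist T_c > 0 and ρ > 0 such that the matrix ∫₀^{T_c} Φ(τ)dτ − ρ·(1 : Matrix (Fin q) (Fin q) ℝ) is positive semidefinite. Then for every t ≥ T_c, det((1 : Matrix (Fin q) (Fin q) ℝ) − F(t)·(F(0))⁻¹) ≠ 0, i.e. the matrix 1 − F(t)F(0)⁻¹ is invertible. -/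
open Matrix MeasureTheory

attribute [local instance] Matrix.normedAddCommGroup Matrix.normedSpace

/-- Key implication (3) of the paper: interval excitation of the regressor
implies nonsingularity of `I − F(t)F(0)⁻¹` for all `t ≥ T_c`, where `F` is the
LS covariance matrix, i.e. `d/dt F(t)⁻¹ = φ(t)φ(t)ᵀ`. -/
theorem ie_implies_det_ne_zero
    (q : ℕ) (φ : ℝ → Fin q → ℝ) (hφ : Continuous φ)
    (F : ℝ → Matrix (Fin q) (Fin q) ℝ)
    (hFinv : ∀ t : ℝ, IsUnit (F t))
    (hF : ∀ t : ℝ, HasDerivAt (fun s => (F s)⁻¹) (vecMulVec (φ t) (φ t)) t)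
    (Tc ρ : ℝ) (hTc : 0 < Tc) (hρ : 0 < ρ)
    (hIE : ((∫ τ in (0:ℝ)..Tc, vecMulVec (φ τ) (φ τ)) -
        ρ • (1 : Matrix (Fin q) (Fin q) ℝ)).PosSemidef) :
    ∀ t : ℝ, Tc ≤ t → ((1 : Matrix (Fin q) (Fin q) ℝ) - F t * (F 0)⁻¹).det ≠ 0 := by
  intro t ht
  have hΦc : Continuous (fun τ : ℝ => vecMulVec (φ τ) (φ τ)) := by
    apply continuous_matrix
    intro i j
    exact ((continuous_apply i).comp hφ).mul ((continuous_apply j).comp hφ)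
  have hInt : ∀ a b : ℝ, _ := fun a b => hΦc.intervalIntegrable (μ := volume) a b
  -- quadratic form as a continuous linear map
  have hquad : ∀ (x : Fin q → ℝ) (a b : ℝ),
      x ⬝ᵥ (∫ τ in a..b, vecMulVec (φ τ) (φ τ)) *ᵥ x
        = ∫ τ in a..b, (φ τ ⬝ᵥ x) ^ 2 := by
    intro x a b
    let L : Matrix (Fin q) (Fin q) ℝ →ₗ[ℝ] ℝ :=
      { toFun := fun M => x ⬝ᵥ M *ᵥ x
        map_add' := fun M N => by simp [Matrix.add_mulVec, dotProduct_add]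
        map_smul' := fun c M => by simp [Matrix.smul_mulVec, dotProduct_smul] }
    have := (L.toContinuousLinearMap).intervalIntegral_comp_comm (hInt a b)
    have h1 : x ⬝ᵥ (∫ τ in a..b, vecMulVec (φ τ) (φ τ)) *ᵥ x
        = ∫ τ in a..b, x ⬝ᵥ (vecMulVec (φ τ) (φ τ)) *ᵥ x := by
      exact this.symm
    rw [h1]
    congr 1
    ext τ
    have : (vecMulVec (φ τ) (φ τ)) *ᵥ x = fun i => φ τ i * (φ τ ⬝ᵥ x) := by
      ext i
      simp [vecMulVec, mulVec, dotProduct, Finset.mul_sum, mul_assoc]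
    rw [this]
    simp only [dotProduct, sq]
    rw [Finset.sum_mul]
    refine Finset.sum_congr rfl fun i _ => ?_
    ring
  -- FTC
  have hS : ∀ s : ℝ, (F s)⁻¹ - (F 0)⁻¹ = ∫ τ in (0:ℝ)..s, vecMulVec (φ τ) (φ τ) := by
    intro s
    exact (intervalIntegral.integral_eq_sub_of_hasDerivAt (fun τ _ => hF τ) (hInt 0 s)).symm
  -- positivity of the quadratic form of S t
  have hpos : ∀ x : Fin q → ℝ, x ≠ 0 →
      0 < x ⬝ᵥ ((F t)⁻¹ - (F 0)⁻¹) *ᵥ x := by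
    intro x hx
    rw [hS t]
    have hsplit : (∫ τ in (0:ℝ)..t, vecMulVec (φ τ) (φ τ))
        = (∫ τ in (0:ℝ)..Tc, vecMulVec (φ τ) (φ τ))
          + ∫ τ in Tc..t, vecMulVec (φ τ) (φ τ) :=
      (intervalIntegral.integral_add_adjacent_intervals (hInt 0 Tc) (hInt Tc t)).symm
    rw [hsplit]
    rw [Matrix.add_mulVec, dotProduct_add]
    have h2 : (0:ℝ) ≤ x ⬝ᵥ (∫ τ in Tc..t, vecMulVec (φ τ) (φ τ)) *ᵥ x := by
      rw [hquad]
      exact intervalIntegral.integral_nonneg ht (fun τ _ => sq_nonneg _)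
    have h1 : ρ * (x ⬝ᵥ x) ≤ x ⬝ᵥ (∫ τ in (0:ℝ)..Tc, vecMulVec (φ τ) (φ τ)) *ᵥ x := by
      have := hIE.dotProduct_mulVec_nonneg x
      have hstar : star x = x := by simp
      rw [hstar] at this
      rw [Matrix.sub_mulVec, dotProduct_sub] at this
      have : x ⬝ᵥ (ρ • (1 : Matrix (Fin q) (Fin q) ℝ)) *ᵥ x
          ≤ x ⬝ᵥ (∫ τ in (0:ℝ)..Tc, vecMulVec (φ τ) (φ τ)) *ᵥ x := by linarith
      simpa [Matrix.smul_mulVec, dotProduct_smul, smul_eq_mul] using this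
    have hxx : 0 < x ⬝ᵥ x := by
      have : 0 ≤ x ⬝ᵥ x := Finset.sum_nonneg fun i _ => mul_self_nonneg _
      rcases this.lt_or_eq with h | h
      · exact h
      · exfalso; apply hx
        funext i
        have := Finset.sum_eq_zero_iff_of_nonneg
          (fun j (_ : j ∈ Finset.univ) => mul_self_nonneg (x j)) |>.mp h.symm i (Finset.mem_univ i)
        exact mul_self_eq_zero.mp this
    nlinarith
  -- det of S t nonzero
  have hdetS : ((F t)⁻¹ - (F 0)⁻¹).det ≠ 0 := by
    intro hdet
    obtain ⟨v, hv, hMv⟩ := (Matrix.exists_mulVec_eq_zero_iff).mpr hdet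
    have := hpos v hv
    rw [hMv] at this
    simp at this
  have hdetF : (F t).det ≠ 0 := by
    have := (Matrix.isUnit_iff_isUnit_det (F t)).mp (hFinv t)
    exact IsUnit.ne_zero this
  have hfact : (1 : Matrix (Fin q) (Fin q) ℝ) - F t * (F 0)⁻¹
      = F t * ((F t)⁻¹ - (F 0)⁻¹) := by
    rw [Matrix.mul_sub, Matrix.mul_nonsing_inv _ ((Matrix.isUnit_iff_isUnit_det (F t)).mp (hFinv t))]
  rw [hfact, Matrix.det_mul]
  exact mul_ne_zero hdetF hdetS
end

section
/- (Proposition 1(i).) Let q ∈ ℕ, γ > 0, f₀ > 0, θ, θ₀ ∈ (Fin q → ℝ), let φ : ℝ → (Fin q → ℝ) be continuous, and set y(t) := φ(t) ⬝ᵥ θ. Let χ : ℝ → ℝ be continuous, let F : ℝ → Matrix (Fin q) (Fin q) ℝ be invertible-valued with F(0) = f₀⁻¹·1 and, for every t ∈ ℝ, derivative −γ·F(t)·Φ(t)·F(t) + χ(t)·F(t) at t; let θ̂ : ℝ → (Fin q → ℝ) have θ̂(0) = θ₀ and, for every t ∈ ℝ, derivative γ·(y(t) − φ(t) ⬝ᵥ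 θ̂(t)) • (F(t) *ᵥ φ(t)) at t; let z : ℝ → ℝ have z(0) = 1 and, for every t ∈ ℝ, derivative −χ(t)·z(t) at t, and assume 0 < z(t) ≤ 1 for all t ≥ 0. Suppose there exist T_c > 0 and ρ > 0 such that ∫₀^{T_c} Φ(τ)dτ − ρ·1 is positive semidefinite. Then for every t ≥ T_c, the matrix 1 − (f₀·z(t)) • F(t) is invertible and (1 − (f₀·z(t)) • F(t))⁻¹ *ᵥ (θ̂(t) − (f₀·z(t)) • (F(t) *ᵥ θ₀)) = θ. -/
open Matrix MeasureTheory

attribute [local instance] Matrix.normedAddCommGroup Matrix.normedSpace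

namespace LsFfFctAux

variable {q : ℕ}

lemma vecMulVec_mulVec' (u v w : Fin q → ℝ) :
    vecMulVec u v *ᵥ w = (v ⬝ᵥ w) • u := by
  ext i
  simp only [Matrix.mulVec, Matrix.vecMulVec_apply, dotProduct, Pi.smul_apply, smul_eq_mul,
    Finset.sum_mul]
  exact Finset.sum_congr rfl fun j _ => by ring

lemma norm_mulVec_le (A : Matrix (Fin q) (Fin q) ℝ) (x : Fin q → ℝ) :
    ‖A *ᵥ x‖ ≤ (q : ℝ) * ‖A‖ * ‖x‖ := by
  refine (pi_norm_le_iff_of_nonneg (by positivity)).2 fun i => ?_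
  have : (A *ᵥ x) i = ∑ j, A i j * x j := rfl
  rw [this]
  calc ‖∑ j, A i j * x j‖ ≤ ∑ j, ‖A i j * x j‖ := norm_sum_le _ _
    _ ≤ ∑ _j : Fin q, ‖A‖ * ‖x‖ := by
        refine Finset.sum_le_sum fun j _ => ?_
        rw [norm_mul]
        exact mul_le_mul (Matrix.norm_entry_le_entrywise_sup_norm A)
          (norm_le_pi_norm x j) (norm_nonneg _) (norm_nonneg _)
    _ = (q : ℝ) * ‖A‖ * ‖x‖ := by
        simp [Finset.sum_const, mul_assoc]

lemma norm_matMul_le (A B : Matrix (Fin q) (Fin q) ℝ) :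
    ‖A * B‖ ≤ (q : ℝ) * ‖A‖ * ‖B‖ := by
  refine (Matrix.norm_le_iff (by positivity)).2 fun i j => ?_
  have : (A * B) i j = ∑ k, A i k * B k j := rfl
  rw [this]
  calc ‖∑ k, A i k * B k j‖ ≤ ∑ k, ‖A i k * B k j‖ := norm_sum_le _ _
    _ ≤ ∑ _k : Fin q, ‖A‖ * ‖B‖ := by
        refine Finset.sum_le_sum fun k _ => ?_
        rw [norm_mul]
        exact mul_le_mul (Matrix.norm_entry_le_entrywise_sup_norm A)
          (Matrix.norm_entry_le_entrywise_sup_norm B) (norm_nonneg _) (norm_nonneg _)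
    _ = (q : ℝ) * ‖A‖ * ‖B‖ := by
        simp [Finset.sum_const, mul_assoc]

noncomputable def mulCLM (q : ℕ) :=
  LinearMap.mkContinuous₂ (LinearMap.mul ℝ (Matrix (Fin q) (Fin q) ℝ)) q fun A B => norm_matMul_le A B

@[simp] lemma mulCLM_apply (A B : Matrix (Fin q) (Fin q) ℝ) : mulCLM q A B = A * B := rfl

noncomputable def mvCLM (q : ℕ) : Matrix (Fin q) (Fin q) ℝ →L[ℝ]
    (Fin q → ℝ) →L[ℝ] (Fin q → ℝ) :=
  LinearMap.mkContinuous₂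
    (LinearMap.mk₂ ℝ (fun A x => A *ᵥ x)
      (fun A B x => Matrix.add_mulVec A B x)
      (fun c A x => by rw [Matrix.smul_mulVec])
      (fun A x y => Matrix.mulVec_add A x y)
      (fun c A x => Matrix.mulVec_smul A c x))
    q fun A x => norm_mulVec_le A x

@[simp] lemma mvCLM_apply (A : Matrix (Fin q) (Fin q) ℝ) (x : Fin q → ℝ) :
    mvCLM q A x = A *ᵥ x := rfl

noncomputable def qfCLM (q : ℕ) (x : Fin q → ℝ) :
    @ContinuousLinearMap ℝ ℝ _ _ (RingHom.id ℝ) (Matrix (Fin q) (Fin q) ℝ)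
      PseudoMetricSpace.toUniformSpace.toTopologicalSpace _ ℝ _ _ _ _ :=
  LinearMap.toContinuousLinearMap
    { toFun := fun M => x ⬝ᵥ (M *ᵥ x)
      map_add' := fun A B => by rw [Matrix.add_mulVec, dotProduct_add]
      map_smul' := fun c A => by
        rw [Matrix.smul_mulVec, dotProduct_smul, RingHom.id_apply, smul_eq_mul] }

@[simp] lemma qfCLM_apply (x : Fin q → ℝ) (M : Matrix (Fin q) (Fin q) ℝ) :
    qfCLM q x M = x ⬝ᵥ (M *ᵥ x) := rfl

lemma eq_zero_of_gronwall {E : Type*} [NormedAddCommGroup E] [NormedSpace ℝ E]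
    {f f' : ℝ → E} {T K : ℝ}
    (hc : ContinuousOn f (Set.Icc 0 T))
    (hd : ∀ s ∈ Set.Ico 0 T, HasDerivWithinAt f (f' s) (Set.Ici s) s)
    (h0 : f 0 = 0)
    (hb : ∀ s ∈ Set.Ico 0 T, ‖f' s‖ ≤ K * ‖f s‖) :
    ∀ s ∈ Set.Icc 0 T, f s = 0 := by
  intro s hs
  have key := norm_le_gronwallBound_of_norm_deriv_right_le (δ := 0) (K := K) (ε := 0) hc hd
    (by simp [h0] : ‖f 0‖ ≤ 0)
    (fun u hu => by simpa using hb u hu) s hs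
  rw [gronwallBound_ε0_δ0] at key
  exact norm_le_zero_iff.1 key

end LsFfFctAux

/-- Proposition 1(i) of the paper: finite convergence time of the standard LS
estimator with forgetting factor.  Under interval excitation, for all
`t ≥ T_c` the matrix `I − f₀ z(t) F(t)` is invertible and
`θ_FCT(t) := (I − f₀ z(t) F(t))⁻¹ (θ̂(t) − f₀ z(t) F(t) θ₀) = θ`. -/
theorem ls_ff_fct_proposition
    (q : ℕ) (γ f₀ : ℝ) (hγ : 0 < γ) (hf₀ : 0 < f₀)
    (θ θ₀ : Fin q → ℝ) (φ : ℝ → Fin q → ℝ) (hφ : Continuous φ)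
    (y : ℝ → ℝ) (hy : ∀ t : ℝ, y t = φ t ⬝ᵥ θ)
    (χ : ℝ → ℝ) (hχ : Continuous χ)
    (F : ℝ → Matrix (Fin q) (Fin q) ℝ)
    (hFinv : ∀ t : ℝ, IsUnit (F t))
    (hF0 : F 0 = f₀⁻¹ • (1 : Matrix (Fin q) (Fin q) ℝ))
    (hF : ∀ t : ℝ, HasDerivAt F
      (-(γ • (F t * vecMulVec (φ t) (φ t) * F t)) + χ t • F t) t)
    (θh : ℝ → Fin q → ℝ) (hθh0 : θh 0 = θ₀)
    (hθh : ∀ t : ℝ, HasDerivAt θh (γ • ((y t - φ t ⬝ᵥ θh t) • (F t *ᵥ φ t))) t)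
    (z : ℝ → ℝ) (hz0 : z 0 = 1)
    (hzderiv : ∀ t : ℝ, HasDerivAt z (-(χ t * z t)) t)
    (hz : ∀ t : ℝ, 0 ≤ t → 0 < z t ∧ z t ≤ 1)
    (Tc ρ : ℝ) (hTc : 0 < Tc) (hρ : 0 < ρ)
    (hIE : ((∫ τ in (0:ℝ)..Tc, vecMulVec (φ τ) (φ τ)) -
        ρ • (1 : Matrix (Fin q) (Fin q) ℝ)).PosSemidef) :
    ∀ t : ℝ, Tc ≤ t →
      IsUnit ((1 : Matrix (Fin q) (Fin q) ℝ) - (f₀ * z t) • F t) ∧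
      ((1 : Matrix (Fin q) (Fin q) ℝ) - (f₀ * z t) • F t)⁻¹ *ᵥ
        (θh t - (f₀ * z t) • (F t *ᵥ θ₀)) = θ := by
  classical
  open LsFfFctAux in
  set Φ : ℝ → Matrix (Fin q) (Fin q) ℝ := fun s => vecMulVec (φ s) (φ s) with hΦdef
  have hΦc : Continuous Φ := continuous_matrix fun i j => by
    simp only [hΦdef, Matrix.vecMulVec_apply]
    exact ((continuous_apply i).comp hφ).mul ((continuous_apply j).comp hφ)
  have hzc : Continuous z := continuous_iff_continuousAt.mpr fun s => (hzderiv s).continuousAt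
  have hFc : Continuous F := continuous_iff_continuousAt.mpr fun s => (hF s).continuousAt
  have hθhc : Continuous θh := continuous_iff_continuousAt.mpr fun s => (hθh s).continuousAt
  set w : ℝ → ℝ := fun s => z (max s 0) with hwdef
  have hwz : ∀ s : ℝ, 0 ≤ s → w s = z s := fun s hs => by
    simp [hwdef, max_eq_left hs]
  have hwpos : ∀ s, 0 < w s := fun s => (hz _ (le_max_right s 0)).1
  have hwle : ∀ s, w s ≤ 1 := fun s => (hz _ (le_max_right s 0)).2
  have hwc : Continuous w := hzc.comp (continuous_id.max continuous_const)
  have hwd : ∀ s : ℝ, 0 ≤ s → HasDerivWithinAt w (-(χ s * z s)) (Set.Ici s) s := fun s hs =>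
    ((hzderiv s).hasDerivWithinAt).congr (fun u hu => hwz u (hs.trans hu)) (hwz s hs)
  set g : ℝ → Matrix (Fin q) (Fin q) ℝ := fun s => (w s)⁻¹ • Φ s with hgdef
  have hgc : Continuous g := ((hwc.inv₀ fun s => (hwpos s).ne').smul hΦc)
  set J : ℝ → Matrix (Fin q) (Fin q) ℝ := fun u => ∫ s in (0:ℝ)..u, g s with hJdef
  have hJd : ∀ u, HasDerivAt J (g u) u := fun u =>
    intervalIntegral.integral_hasDerivAt_right (hgc.intervalIntegrable _ _)
      (by
        have : TopologicalSpace.PseudoMetrizableSpace (Matrix (Fin q) (Fin q) ℝ) :=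
          inferInstanceAs (TopologicalSpace.PseudoMetrizableSpace (Fin q → Fin q → ℝ))
        exact hgc.stronglyMeasurableAtFilter _ _) hgc.continuousAt
  have hJc : Continuous J := continuous_iff_continuousAt.mpr fun s => (hJd s).continuousAt
  set R : ℝ → Matrix (Fin q) (Fin q) ℝ :=
    fun s => (f₀ * w s) • (1 : Matrix (Fin q) (Fin q) ℝ) + (γ * w s) • J s with hRdef
  have hRc : Continuous R :=
    ((continuous_const.mul hwc).smul continuous_const).add ((continuous_const.mul hwc).smul hJc)
  set A : ℝ → Matrix (Fin q) (Fin q) ℝ := fun s => -(γ • (F s * Φ s)) with hAdef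
  have hAc : Continuous A := ((hFc.matrix_mul hΦc).const_smul γ).neg
  -- derivative of R on [0,∞)
  have hRd : ∀ s : ℝ, 0 ≤ s →
      HasDerivWithinAt R (-(χ s) • R s + γ • Φ s) (Set.Ici s) s := by
    intro s hs
    have h1 : HasDerivWithinAt (fun u => (f₀ * w u) • (1 : Matrix (Fin q) (Fin q) ℝ))
        ((f₀ * -(χ s * z s)) • (1 : Matrix (Fin q) (Fin q) ℝ)) (Set.Ici s) s :=
      ((hwd s hs).const_mul f₀).smul_const _
    have h2 : HasDerivWithinAt (fun u => (γ * w u) • J u)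
        ((γ * w s) • g s + (γ * -(χ s * z s)) • J s) (Set.Ici s) s :=
      ((hwd s hs).const_mul γ).smul (hJd s).hasDerivWithinAt
    have h3 := h1.add h2
    refine h3.congr_deriv (Eq.symm ?_)
    have hws : w s = z s := hwz s hs
    have hzne : z s ≠ 0 := (hz s hs).1.ne'
    rw [hRdef]
    simp only [hgdef, hws, smul_smul]
    rw [show γ * z s * (z s)⁻¹ = γ from mul_inv_cancel_right₀ hzne γ]
    module
  -- U := F * R - 1 satisfies U' = A U, U 0 = 0
  set U : ℝ → Matrix (Fin q) (Fin q) ℝ := fun u => F u * R u - 1 with hUdef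
  have hUc : Continuous U := (hFc.matrix_mul hRc).sub continuous_const
  have hU0 : U 0 = 0 := by
    have hJ0 : J 0 = 0 := intervalIntegral.integral_same
    have hw0 : w 0 = 1 := by rw [hwz 0 le_rfl, hz0]
    simp [hUdef, hRdef, hJ0, hw0, hF0, Matrix.smul_mul, Matrix.mul_smul, smul_smul,
      inv_mul_cancel₀ hf₀.ne', mul_inv_cancel₀ hf₀.ne']
  have hUd : ∀ s : ℝ, 0 ≤ s → HasDerivWithinAt U (A s * U s) (Set.Ici s) s := by
    intro s hs
    have hc : HasDerivWithinAt (fun u => mulCLM q (F u))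
        (mulCLM q (-(γ • (F s * Φ s * F s)) + χ s • F s)) (Set.Ici s) s :=
      (mulCLM q).hasFDerivAt.comp_hasDerivWithinAt s (hF s).hasDerivWithinAt
    have happ := hc.clm_apply (hRd s hs)
    have happ' : HasDerivWithinAt (fun u => F u * R u)
        (-(γ • (F s * Φ s * F s * R s)) + χ s • (F s * R s) +
          F s * (-(χ s • R s) + γ • Φ s)) (Set.Ici s) s := by
      simp at happ ⊢; exact happ
    have := happ'.sub_const (1 : Matrix (Fin q) (Fin q) ℝ)
    refine this.congr_deriv (Eq.symm ?_)
    simp only [hAdef, hUdef, Matrix.smul_mul, Matrix.mul_smul, mul_sub, mul_one, add_mul,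
      neg_mul, mul_neg, mul_add, mul_assoc]
    module
  -- e := θh - θ - (f₀ w) • F (θ₀ - θ) satisfies e' = A e, e 0 = 0
  set c0 : Fin q → ℝ := θ₀ - θ with hc0def
  set e : ℝ → (Fin q → ℝ) := fun u => θh u - θ - (f₀ * w u) • (F u *ᵥ c0) with hedef
  have hec : Continuous e := by
    refine (hθhc.sub continuous_const).sub ?_
    exact (continuous_const.mul hwc).smul (hFc.matrix_mulVec continuous_const)
  have he0 : e 0 = 0 := by
    have hw0 : w 0 = 1 := by rw [hwz 0 le_rfl, hz0]
    simp [hedef, hw0, hθh0, hF0, hc0def, Matrix.smul_mulVec, Matrix.one_mulVec,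
      smul_smul, mul_inv_cancel₀ hf₀.ne']
  have hkey : ∀ s (v : Fin q → ℝ), (F s * Φ s) *ᵥ v = (φ s ⬝ᵥ v) • (F s *ᵥ φ s) := by
    intro s v
    rw [← Matrix.mulVec_mulVec, hΦdef, vecMulVec_mulVec', Matrix.mulVec_smul]
  have hed : ∀ s : ℝ, 0 ≤ s → HasDerivWithinAt e (A s *ᵥ e s) (Set.Ici s) s := by
    intro s hs
    have hws : w s = z s := hwz s hs
    have hFv : HasDerivWithinAt (fun u => F u *ᵥ c0)
        (-(γ • (F s * Φ s * F s) *ᵥ c0) + χ s • F s *ᵥ c0) (Set.Ici s) s := by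
      have hc : HasDerivWithinAt (fun u => mvCLM q (F u))
          (mvCLM q (-(γ • (F s * Φ s * F s)) + χ s • F s)) (Set.Ici s) s :=
        (mvCLM q).hasFDerivAt.comp_hasDerivWithinAt s (hF s).hasDerivWithinAt
      have := hc.clm_apply (hasDerivWithinAt_const s _ c0)
      simpa using this
    have h2 : HasDerivWithinAt (fun u => (f₀ * w u) • (F u *ᵥ c0))
        ((f₀ * w s) • (-(γ • (F s * Φ s * F s) *ᵥ c0) + χ s • F s *ᵥ c0) +
          (f₀ * -(χ s * z s)) • (F s *ᵥ c0)) (Set.Ici s) s :=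
      ((hwd s hs).const_mul f₀).smul hFv
    have h3 := (((hθh s).hasDerivWithinAt).sub_const θ).sub h2
    refine h3.congr_deriv (Eq.symm ?_)
    have hy' : y s - φ s ⬝ᵥ θh s = -(φ s ⬝ᵥ (θh s - θ)) := by
      rw [hy s, dotProduct_sub]; ring
    rw [hy']
    simp only [hAdef, hedef, hws, Matrix.neg_mulVec, Matrix.smul_mulVec,
      Matrix.mulVec_sub, Matrix.add_mulVec, ← Matrix.mulVec_mulVec, hkey,
      Matrix.mulVec_smul, dotProduct_sub, dotProduct_smul, smul_eq_mul, smul_smul,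
      smul_sub, smul_add, neg_smul, smul_neg]
    module
  -- Gronwall: U and e vanish on [0, ∞)
  intro t ht
  have ht0 : 0 ≤ t := hTc.le.trans ht
  obtain ⟨C, hC⟩ := (isCompact_Icc (a := (0:ℝ)) (b := t)).exists_bound_of_continuousOn
    hAc.continuousOn
  have hbound : ∀ (V : Matrix (Fin q) (Fin q) ℝ) (s : ℝ), s ∈ Set.Icc 0 t →
      ‖A s * V‖ ≤ ((q : ℝ) * C) * ‖V‖ := by
    intro V s hs
    calc ‖A s * V‖ ≤ (q : ℝ) * ‖A s‖ * ‖V‖ := norm_matMul_le _ _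
      _ ≤ ((q : ℝ) * C) * ‖V‖ := by
          have h1 := hC s hs
          have h2 : (0:ℝ) ≤ (q : ℝ) * ‖V‖ := by positivity
          nlinarith [norm_nonneg V, norm_nonneg (A s)]
  have hboundv : ∀ (v : Fin q → ℝ) (s : ℝ), s ∈ Set.Icc 0 t →
      ‖A s *ᵥ v‖ ≤ ((q : ℝ) * C) * ‖v‖ := by
    intro v s hs
    calc ‖A s *ᵥ v‖ ≤ (q : ℝ) * ‖A s‖ * ‖v‖ := norm_mulVec_le _ _
      _ ≤ ((q : ℝ) * C) * ‖v‖ := by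
          have h1 := hC s hs
          have h2 : (0:ℝ) ≤ (q : ℝ) * ‖v‖ := by positivity
          nlinarith [norm_nonneg v, norm_nonneg (A s)]
  have hUzero : U t = 0 :=
    eq_zero_of_gronwall hUc.continuousOn
      (fun s hs => hUd s hs.1) hU0
      (fun s hs => hbound (U s) s ⟨hs.1, hs.2.le⟩) t ⟨ht0, le_rfl⟩
  have hezero : e t = 0 :=
    eq_zero_of_gronwall hec.continuousOn
      (fun s hs => hed s hs.1) he0
      (fun s hs => hboundv (e s) s ⟨hs.1, hs.2.le⟩) t ⟨ht0, le_rfl⟩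
  have hwt : w t = z t := hwz t ht0
  have hFR : F t * R t = 1 := by
    have := hUzero; rw [hUdef] at this; exact sub_eq_zero.mp this
  have hsplit : (1 : Matrix (Fin q) (Fin q) ℝ) - (f₀ * z t) • F t =
      (γ * z t) • (F t * J t) := by
    rw [← hFR, hRdef]
    simp only [mul_add, Matrix.mul_smul, mul_one, hwt]
    abel
  -- positivity of the quadratic form of J t
  have hquad : ∀ x : Fin q → ℝ, x ≠ 0 → 0 < x ⬝ᵥ (J t *ᵥ x) := by
    intro x hx
    have hdc : Continuous fun s => φ s ⬝ᵥ x := by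
      simp only [dotProduct]
      exact continuous_finset_sum _ fun i _ => ((continuous_apply i).comp hφ).mul continuous_const
    have hint1 : ∀ (a b : ℝ), IntervalIntegrable (fun s => (w s)⁻¹ * (φ s ⬝ᵥ x) ^ 2) volume a b :=
      fun a b => ((hwc.inv₀ fun s => (hwpos s).ne').mul (hdc.pow 2)).intervalIntegrable a b
    have hint2 : ∀ (a b : ℝ), IntervalIntegrable (fun s => (φ s ⬝ᵥ x) ^ 2) volume a b :=
      fun a b => (hdc.pow 2).intervalIntegrable a b
    have hqf : ∀ s, x ⬝ᵥ (Φ s *ᵥ x) = (φ s ⬝ᵥ x) ^ 2 := by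
      intro s
      rw [hΦdef]
      rw [vecMulVec_mulVec', dotProduct_smul, smul_eq_mul, dotProduct_comm]
      ring
    have h1 : x ⬝ᵥ (J t *ᵥ x) = ∫ s in (0:ℝ)..t, (w s)⁻¹ * (φ s ⬝ᵥ x) ^ 2 := by
      rw [← qfCLM_apply, hJdef]
      show qfCLM q x (∫ s in (0:ℝ)..t, g s) = _
      erw [← ContinuousLinearMap.intervalIntegral_comp_comm _ (hgc.intervalIntegrable _ _)]
      refine intervalIntegral.integral_congr fun s _ => ?_
      simp only [hgdef, qfCLM_apply, Matrix.smul_mulVec, dotProduct_smul, smul_eq_mul]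
      rw [hqf]
    have h2 : x ⬝ᵥ ((∫ τ in (0:ℝ)..Tc, Φ τ) *ᵥ x) =
        ∫ s in (0:ℝ)..Tc, (φ s ⬝ᵥ x) ^ 2 := by
      rw [← qfCLM_apply]
      erw [← ContinuousLinearMap.intervalIntegral_comp_comm _ (hΦc.intervalIntegrable _ _)]
      refine intervalIntegral.integral_congr fun s _ => ?_
      simp only [qfCLM_apply]
      exact hqf s
    have hxx : 0 < x ⬝ᵥ x := by
      have hne : x ⬝ᵥ x ≠ 0 := fun h => hx (dotProduct_self_eq_zero.mp h)
      have hnn : 0 ≤ x ⬝ᵥ x := Finset.sum_nonneg fun i _ => mul_self_nonneg _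
      exact lt_of_le_of_ne hnn (Ne.symm hne)
    have hρx : ρ * (x ⬝ᵥ x) ≤ ∫ s in (0:ℝ)..Tc, (φ s ⬝ᵥ x) ^ 2 := by
      have := hIE.dotProduct_mulVec_nonneg x
      rw [star_trivial, Matrix.sub_mulVec, dotProduct_sub, Matrix.smul_mulVec,
        Matrix.one_mulVec, dotProduct_smul, smul_eq_mul] at this
      rw [← h2]
      linarith
    have hmono : ∫ s in (0:ℝ)..Tc, (φ s ⬝ᵥ x) ^ 2 ≤
        ∫ s in (0:ℝ)..Tc, (w s)⁻¹ * (φ s ⬝ᵥ x) ^ 2 := by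
      refine intervalIntegral.integral_mono_on hTc.le (hint2 0 Tc) (hint1 0 Tc) fun s _ => ?_
      have h1 : (1:ℝ) ≤ (w s)⁻¹ := one_le_inv₀ (hwpos s) |>.2 (hwle s)
      nlinarith [sq_nonneg (φ s ⬝ᵥ x)]
    have hrest : 0 ≤ ∫ s in Tc..t, (w s)⁻¹ * (φ s ⬝ᵥ x) ^ 2 :=
      intervalIntegral.integral_nonneg ht fun s _ =>
        mul_nonneg (inv_nonneg.2 (hwpos s).le) (sq_nonneg _)
    have hsum : (∫ s in (0:ℝ)..Tc, (w s)⁻¹ * (φ s ⬝ᵥ x) ^ 2) +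
        (∫ s in Tc..t, (w s)⁻¹ * (φ s ⬝ᵥ x) ^ 2) =
        ∫ s in (0:ℝ)..t, (w s)⁻¹ * (φ s ⬝ᵥ x) ^ 2 :=
      intervalIntegral.integral_add_adjacent_intervals (hint1 0 Tc) (hint1 Tc t)
    rw [h1, ← hsum]
    have : 0 < ρ * (x ⬝ᵥ x) := mul_pos hρ hxx
    linarith
  have hdetJ : IsUnit (J t).det := by
    rw [isUnit_iff_ne_zero]
    intro hdet0
    obtain ⟨v, hv, hv0⟩ := Matrix.exists_mulVec_eq_zero_iff.mpr hdet0
    have := hquad v hv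
    rw [hv0, dotProduct_zero] at this
    exact lt_irrefl 0 this
  have hzt : 0 < z t := (hz t ht0).1
  have hunit : IsUnit ((1 : Matrix (Fin q) (Fin q) ℝ) - (f₀ * z t) • F t) := by
    rw [hsplit, Matrix.isUnit_iff_isUnit_det, Matrix.det_smul, Matrix.det_mul]
    exact ((isUnit_iff_ne_zero.2 (by positivity : γ * z t ≠ 0)).pow (Fintype.card (Fin q))).mul
      (((Matrix.isUnit_iff_isUnit_det _).1 (hFinv t)).mul hdetJ)
  refine ⟨hunit, ?_⟩
  have hee : θh t - (f₀ * z t) • (F t *ᵥ θ₀) =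
      ((1 : Matrix (Fin q) (Fin q) ℝ) - (f₀ * z t) • F t) *ᵥ θ := by
    have h : θh t - θ - (f₀ * w t) • (F t *ᵥ c0) = 0 := hezero
    rw [hwt, sub_eq_zero] at h
    rw [sub_eq_iff_eq_add] at h
    rw [h, hc0def, Matrix.sub_mulVec, Matrix.one_mulVec, Matrix.smul_mulVec,
      Matrix.mulVec_sub, smul_sub]
    abel
  rw [hee, Matrix.mulVec_mulVec,
    Matrix.nonsing_inv_mul _ ((Matrix.isUnit_iff_isUnit_det _).1 hunit), Matrix.one_mulVec]
end

section
/- (Lemma 1: IE is necessary and sufficient for identifiability.) Let q ∈ ℕ, T_c > 0, and let φ : ℝ → (Fin q → ℝ) be continuous. Then the following are equivalent: (a) there exists ρ > 0 such that ∫₀^{T_c} Φ(τ)dτ − ρ·(1 : Matrix (Fin q) (Fin q) ℝ) is positive semidefinite; (b) for all θ₁, θ₂ ∈ (Fin q → ℝ), if φ(t) ⬝ᵥ θ₁ = φ(t) ⬝ᵥ θ₂ for every t ∈ [0, T_c], then θ₁ = θ₂. -/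
open Matrix MeasureTheory

attribute [local instance] Matrix.normedAddCommGroup Matrix.normedSpace

private lemma quad_vecMulVec {q : ℕ} (v θ : Fin q → ℝ) :
    θ ⬝ᵥ (vecMulVec v v *ᵥ θ) = (v ⬝ᵥ θ) ^ 2 := by
  simp only [dotProduct, mulVec, vecMulVec_apply, sq, Finset.sum_mul_sum]
  rw [Finset.sum_comm]
  refine Finset.sum_congr rfl fun i _ => ?_
  rw [Finset.mul_sum]
  refine Finset.sum_congr rfl fun j _ => by ring

/-- the quadratic form `M ↦ θ ⬝ᵥ M *ᵥ θ` as a linear map on matrices -/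
private def quadLM {q : ℕ} (θ : Fin q → ℝ) :
    Matrix (Fin q) (Fin q) ℝ →ₗ[ℝ] ℝ where
  toFun M := θ ⬝ᵥ (M *ᵥ θ)
  map_add' M N := by simp [add_mulVec, dotProduct_add]
  map_smul' c M := by simp [smul_mulVec, dotProduct_smul]

private def entryLM {q : ℕ} (i j : Fin q) :
    Matrix (Fin q) (Fin q) ℝ →ₗ[ℝ] ℝ where
  toFun M := M i j
  map_add' _ _ := rfl
  map_smul' _ _ := rfl

/-- Lemma 1 of the paper: interval excitation of the regressor on `[0, T_c]` is
necessary and sufficient for identifiability of the linear regression equation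
`y(t) = φ(t)ᵀθ` on `[0, T_c]`. -/
theorem ie_iff_identifiable
    (q : ℕ) (Tc : ℝ) (hTc : 0 < Tc)
    (φ : ℝ → Fin q → ℝ) (hφ : Continuous φ) :
    (∃ ρ : ℝ, 0 < ρ ∧ ((∫ τ in (0:ℝ)..Tc, vecMulVec (φ τ) (φ τ)) -
        ρ • (1 : Matrix (Fin q) (Fin q) ℝ)).PosSemidef) ↔
    (∀ θ₁ θ₂ : Fin q → ℝ,
      (∀ t ∈ Set.Icc (0:ℝ) Tc, φ t ⬝ᵥ θ₁ = φ t ⬝ᵥ θ₂) → θ₁ = θ₂) := by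
  have hΦc : Continuous fun τ => vecMulVec (φ τ) (φ τ) := by
    apply continuous_matrix
    intro i j
    simp only [vecMulVec_apply]
    exact (((continuous_apply i).comp hφ).mul ((continuous_apply j).comp hφ))
  have hΦint : @IntervalIntegrable _ _ (Matrix.normedAddCommGroup).toENormedAddCommMonoid.toENormedAddMonoid
      (fun τ => vecMulVec (φ τ) (φ τ)) volume 0 Tc :=
    hΦc.intervalIntegrable 0 Tc
  -- key identity for the quadratic form
  have key : ∀ θ : Fin q → ℝ,
      θ ⬝ᵥ ((∫ τ in (0:ℝ)..Tc, vecMulVec (φ τ) (φ τ)) *ᵥ θ) =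
        ∫ τ in (0:ℝ)..Tc, (φ τ ⬝ᵥ θ) ^ 2 := by
    intro θ
    have h := ((quadLM θ).toContinuousLinearMap).intervalIntegral_comp_comm hΦint
    refine h.symm.trans ?_
    exact intervalIntegral.integral_congr fun τ _ => quad_vecMulVec (φ τ) θ
  have hGsymm : (∫ τ in (0:ℝ)..Tc, vecMulVec (φ τ) (φ τ)).IsHermitian := by
    have hentry : ∀ i j : Fin q, (∫ τ in (0:ℝ)..Tc, vecMulVec (φ τ) (φ τ)) i j =
        ∫ τ in (0:ℝ)..Tc, φ τ i * φ τ j := by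
      intro i j
      have h := ((entryLM i j).toContinuousLinearMap).intervalIntegral_comp_comm hΦint
      refine h.symm.trans ?_
      exact intervalIntegral.integral_congr fun τ _ => rfl
    refine Matrix.IsHermitian.ext fun i j => ?_
    simp only [RCLike.star_def, conj_trivial, hentry]
    exact intervalIntegral.integral_congr fun τ _ => mul_comm _ _
  have hsq : ∀ θ : Fin q → ℝ, Continuous fun τ => (φ τ ⬝ᵥ θ) ^ 2 := by
    intro θ
    apply Continuous.pow
    simp only [dotProduct]
    exact continuous_finset_sum _ fun i _ =>
      ((continuous_apply i).comp hφ).mul continuous_const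
  constructor
  · rintro ⟨ρ, hρ, hPSD⟩ θ₁ θ₂ hEq
    have hzero : ∀ t ∈ Set.Icc (0:ℝ) Tc, φ t ⬝ᵥ (θ₁ - θ₂) = 0 := by
      intro t ht
      simp [dotProduct_sub, sub_eq_zero, hEq t ht]
    have h := hPSD.dotProduct_mulVec_nonneg (θ₁ - θ₂)
    have hint0 : (∫ τ in (0:ℝ)..Tc, (φ τ ⬝ᵥ (θ₁ - θ₂)) ^ 2) = 0 := by
      rw [intervalIntegral.integral_congr (g := fun _ => 0)
        (fun τ hτ => by
          rw [Set.uIcc_of_le hTc.le] at hτ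
          simp [hzero τ hτ])]
      simp
    have hq : (θ₁ - θ₂) ⬝ᵥ (((∫ τ in (0:ℝ)..Tc, vecMulVec (φ τ) (φ τ)) - ρ • 1) *ᵥ (θ₁ - θ₂)) =
        -(ρ * ((θ₁ - θ₂) ⬝ᵥ (θ₁ - θ₂))) := by
      rw [sub_mulVec, dotProduct_sub, key (θ₁ - θ₂), hint0, smul_mulVec,
        one_mulVec, dotProduct_smul]
      simp [smul_eq_mul]
    rw [show star (θ₁ - θ₂) = θ₁ - θ₂ from rfl, hq] at h
    have hnn : 0 ≤ (θ₁ - θ₂) ⬝ᵥ (θ₁ - θ₂) :=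
      Finset.sum_nonneg fun i _ => mul_self_nonneg _
    have hθθ : (θ₁ - θ₂) ⬝ᵥ (θ₁ - θ₂) = 0 := by nlinarith
    exact sub_eq_zero.mp (dotProduct_self_eq_zero.mp hθθ)
  · intro hid
    -- identifiability gives positive definiteness of the quadratic form
    have hQpos : ∀ θ : Fin q → ℝ, θ ≠ 0 →
        0 < θ ⬝ᵥ ((∫ τ in (0:ℝ)..Tc, vecMulVec (φ τ) (φ τ)) *ᵥ θ) := by
      intro θ hθ
      rw [key θ]
      have hne : ∃ t ∈ Set.Icc (0:ℝ) Tc, φ t ⬝ᵥ θ ≠ 0 := by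
        by_contra hcon
        push_neg at hcon
        exact hθ (hid θ 0 (fun t ht => by simp [hcon t ht]))
      obtain ⟨t₀, ht₀, hne⟩ := hne
      refine intervalIntegral.integral_pos hTc ((hsq θ).continuousOn)
        (fun x _ => sq_nonneg _) ⟨t₀, ht₀, ?_⟩
      positivity
    have hQnonneg : ∀ θ : Fin q → ℝ,
        0 ≤ θ ⬝ᵥ ((∫ τ in (0:ℝ)..Tc, vecMulVec (φ τ) (φ τ)) *ᵥ θ) := by
      intro θ
      by_cases hθ : θ = 0
      · simp [hθ]
      · exact (hQpos θ hθ).le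
    -- handle the degenerate case q = 0
    rcases Nat.eq_zero_or_pos q with hq0 | hqpos
    · subst hq0
      refine ⟨1, one_pos, PosSemidef.of_dotProduct_mulVec_nonneg (Subsingleton.elim _ _) fun x => ?_⟩
      simp [dotProduct]
    -- the unit sphere for the dot product
    have hQc : Continuous fun x : Fin q → ℝ =>
        x ⬝ᵥ ((∫ τ in (0:ℝ)..Tc, vecMulVec (φ τ) (φ τ)) *ᵥ x) := by
      simp only [dotProduct, mulVec]
      exact continuous_finset_sum _ fun i _ =>
        (continuous_apply i).mul (continuous_finset_sum _ fun j _ =>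
          continuous_const.mul (continuous_apply j))
    have hScompact : IsCompact {x : Fin q → ℝ | x ⬝ᵥ x = 1} := by
      have hclosed : IsClosed {x : Fin q → ℝ | x ⬝ᵥ x = 1} := by
        have : Continuous fun x : Fin q → ℝ => x ⬝ᵥ x :=
          continuous_finset_sum _ fun i _ =>
            (continuous_apply i).mul (continuous_apply i)
        exact isClosed_eq this continuous_const
      have hbdd : {x : Fin q → ℝ | x ⬝ᵥ x = 1} ⊆ Metric.closedBall 0 1 := by
        intro x hx
        simp only [Metric.mem_closedBall, dist_zero_right]
        rw [pi_norm_le_iff_of_nonneg zero_le_one]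
        intro i
        have h1 : x i * x i ≤ x ⬝ᵥ x :=
          Finset.single_le_sum (f := fun j => x j * x j)
            (fun j _ => mul_self_nonneg (x j)) (Finset.mem_univ i)
        rw [hx] at h1
        rw [Real.norm_eq_abs]
        nlinarith [abs_nonneg (x i), abs_mul_abs_self (x i)]
      exact Metric.isCompact_of_isClosed_isBounded hclosed
        (Metric.isBounded_closedBall.subset hbdd)
    have hSne : {x : Fin q → ℝ | x ⬝ᵥ x = 1}.Nonempty := by
      refine ⟨Pi.single ⟨0, hqpos⟩ 1, ?_⟩
      simp [dotProduct, Pi.single_apply]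
    obtain ⟨u, huS, humin⟩ := hScompact.exists_isMinOn hSne hQc.continuousOn
    have hune : u ≠ 0 := by
      intro h
      rw [h] at huS
      simp [dotProduct] at huS
    have hρpos : 0 < u ⬝ᵥ ((∫ τ in (0:ℝ)..Tc, vecMulVec (φ τ) (φ τ)) *ᵥ u) :=
      hQpos u hune
    refine ⟨_, hρpos, PosSemidef.of_dotProduct_mulVec_nonneg ?_ ?_⟩
    · exact hGsymm.sub (by simp [Matrix.IsHermitian, Matrix.conjTranspose_smul])
    · intro x
      rw [show star x = x from rfl]
      rw [sub_mulVec, dotProduct_sub, smul_mulVec, one_mulVec, dotProduct_smul,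
        smul_eq_mul, sub_nonneg]
      by_cases hx : x = 0
      · simp [hx]
      · have hcpos : 0 < x ⬝ᵥ x := by
          rcases (Finset.sum_nonneg fun i _ =>
            mul_self_nonneg (x i) : (0:ℝ) ≤ x ⬝ᵥ x).lt_or_eq with h | h
          · exact h
          · exact absurd (dotProduct_self_eq_zero.mp h.symm) hx
        set c := x ⬝ᵥ x with hcdef
        set s := Real.sqrt c with hsdef
        have hspos : 0 < s := Real.sqrt_pos.mpr hcpos
        have hs2 : s * s = c := Real.mul_self_sqrt hcpos.le
        have huS' : (s⁻¹ • x) ∈ {y : Fin q → ℝ | y ⬝ᵥ y = 1} := by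
          simp only [Set.mem_setOf_eq, smul_dotProduct, dotProduct_smul,
            smul_eq_mul, ← hcdef]
          field_simp
          nlinarith
        have hscale : (s⁻¹ • x) ⬝ᵥ ((∫ τ in (0:ℝ)..Tc, vecMulVec (φ τ) (φ τ)) *ᵥ (s⁻¹ • x)) =
            s⁻¹ * s⁻¹ * (x ⬝ᵥ ((∫ τ in (0:ℝ)..Tc, vecMulVec (φ τ) (φ τ)) *ᵥ x)) := by
          rw [mulVec_smul, smul_dotProduct, dotProduct_smul, smul_eq_mul, smul_eq_mul]
          ring
        have h2 := isMinOn_iff.mp humin _ huS'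
        rw [hscale] at h2
        have hs2' : s⁻¹ * s⁻¹ * c = 1 := by field_simp; nlinarith
        nlinarith [hQnonneg x, h2]
end

section
/- Let q ∈ ℕ, let φ : ℝ → (Fin q → ℝ) be continuous, and let F₀ ∈ Matrix (Fin q) (Fin q) ℝ be positive definite. For t ≥ 0 define G(t) := F₀⁻¹ + ∫₀ᵗ Φ(τ)dτ. Then for every t ≥ 0 the matrix G(t) is positive definite (hence invertible), and the map F(t) := (G(t))⁻¹ satisfies F(0) = F₀ and has derivative −F(t)·Φ(t)·F(t) at every t ≥ 0 (derivative within [0, ∞) at t = 0). -/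
open Matrix MeasureTheory

section aux
variable {q : ℕ}

attribute [local instance] Matrix.linftyOpNormedAddCommGroup Matrix.linftyOpNormedSpace
  Matrix.linftyOpNormedRing Matrix.linftyOpNormedAlgebra

lemma aux_slope_inverse (G : ℝ → Matrix (Fin q) (Fin q) ℝ) (t : ℝ)
    (G' : Matrix (Fin q) (Fin q) ℝ) (hu : IsUnit (G t))
    (hd : Filter.Tendsto (slope G t) (nhdsWithin t (Set.Ici 0 \ {t})) (nhds G')) :
    Filter.Tendsto (slope (fun s => (G s)⁻¹) t) (nhdsWithin t (Set.Ici 0 \ {t}))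
      (nhds (-((G t)⁻¹ * G' * (G t)⁻¹))) := by
  replace hd := hasDerivWithinAt_iff_tendsto_slope.mpr hd
  refine hasDerivWithinAt_iff_tendsto_slope.mp ?_
  obtain ⟨u, hu⟩ := hu
  have h1 : HasFDerivAt Ring.inverse
      (-(ContinuousLinearMap.mulLeftRight ℝ _ (↑u⁻¹) (↑u⁻¹))) (G t) :=
    hu ▸ hasFDerivAt_ringInverse u
  have h2 := h1.comp_hasDerivWithinAt t hd
  have h3 : (fun s => (G s)⁻¹) = fun s => Ring.inverse (G s) := by
    funext s; exact Matrix.nonsing_inv_eq_ringInverse _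
  rw [h3]
  convert h2 using 1
  case e'_8 => rfl
  simp only [ContinuousLinearMap.neg_apply, ContinuousLinearMap.mulLeftRight_apply]
  rw [Matrix.coe_units_inv, hu]

end aux

attribute [local instance] Matrix.normedAddCommGroup Matrix.normedSpace

instance aux_matrix_enormedAddMonoid (q : ℕ) : ENormedAddMonoid (Matrix (Fin q) (Fin q) ℝ) :=
  inferInstanceAs (ENormedAddMonoid (Fin q → Fin q → ℝ))

/-- Explicit positive-definite solution of the LS covariance ODE
`Ḟ = −F φφᵀ F`, `F(0) = F₀ ≻ 0`: with `G(t) := F₀⁻¹ + ∫₀ᵗ φ(τ)φ(τ)ᵀ dτ`, the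
matrix `G(t)` is positive definite for `t ≥ 0`, `F(t) := G(t)⁻¹` satisfies
`F(0) = F₀` and has derivative `−F(t)φ(t)φ(t)ᵀF(t)` at every `t ≥ 0`
(within `[0, ∞)`). -/
theorem ls_covariance_explicit_solution
    (q : ℕ) (φ : ℝ → Fin q → ℝ) (hφ : Continuous φ)
    (F₀ : Matrix (Fin q) (Fin q) ℝ) (hF₀ : F₀.PosDef)
    (G : ℝ → Matrix (Fin q) (Fin q) ℝ)
    (hG : ∀ t : ℝ, G t = F₀⁻¹ + ∫ τ in (0:ℝ)..t, vecMulVec (φ τ) (φ τ)) :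
    (∀ t : ℝ, 0 ≤ t → (G t).PosDef) ∧
    (G 0)⁻¹ = F₀ ∧
    (∀ t : ℝ, 0 ≤ t → HasDerivWithinAt (fun s => (G s)⁻¹)
      (-((G t)⁻¹ * vecMulVec (φ t) (φ t) * (G t)⁻¹)) (Set.Ici 0) t) := by
  have hΦcont : Continuous (fun τ => vecMulVec (φ τ) (φ τ)) := by
    apply continuous_matrix
    intro i j
    exact ((continuous_apply i).comp hφ).mul ((continuous_apply j).comp hφ)
  have hint : ∀ a b : ℝ, IntervalIntegrable (fun τ => vecMulVec (φ τ) (φ τ))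
      volume a b := fun a b => hΦcont.intervalIntegrable a b
  -- quadratic form as a continuous linear map
  have hq : ∀ (x : Fin q → ℝ) (t : ℝ), 0 ≤ t →
      0 ≤ x ⬝ᵥ (∫ τ in (0:ℝ)..t, vecMulVec (φ τ) (φ τ)) *ᵥ x := by
    intro x t ht
    let L : Matrix (Fin q) (Fin q) ℝ →L[ℝ] ℝ :=
      LinearMap.toContinuousLinearMap
        { toFun := fun A => x ⬝ᵥ A *ᵥ x
          map_add' := fun A B => by simp [Matrix.add_mulVec, dotProduct_add]
          map_smul' := fun c A => by simp [Matrix.smul_mulVec, dotProduct_smul] }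
    have hL := L.intervalIntegral_comp_comm (hint 0 t)
    have hLapp : ∀ A, L A = x ⬝ᵥ A *ᵥ x := fun _ => rfl
    have hL' : ∫ τ in (0:ℝ)..t, L (vecMulVec (φ τ) (φ τ)) =
        L (∫ τ in (0:ℝ)..t, vecMulVec (φ τ) (φ τ)) := hL
    rw [← hLapp, ← hL']
    apply intervalIntegral.integral_nonneg ht
    intro τ _
    have : x ⬝ᵥ (vecMulVec (φ τ) (φ τ)) *ᵥ x = (φ τ ⬝ᵥ x) * (φ τ ⬝ᵥ x) := by
      simp only [dotProduct, Matrix.mulVec, Matrix.vecMulVec_apply, Finset.mul_sum,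
        Finset.sum_mul]
      rw [Finset.sum_comm]
      congr 1; ext i; congr 1; ext j; ring
    rw [hLapp, this]
    exact mul_self_nonneg _
  have hherm : ∀ t : ℝ, (∫ τ in (0:ℝ)..t, vecMulVec (φ τ) (φ τ)).IsHermitian := by
    intro t
    have hent : ∀ i j : Fin q, (∫ τ in (0:ℝ)..t, vecMulVec (φ τ) (φ τ)) i j
        = ∫ τ in (0:ℝ)..t, φ τ i * φ τ j := by
      intro i j
      let E : Matrix (Fin q) (Fin q) ℝ →L[ℝ] ℝ :=
        LinearMap.toContinuousLinearMap
          { toFun := fun A => A i j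
            map_add' := fun A B => rfl
            map_smul' := fun c A => rfl }
      have := E.intervalIntegral_comp_comm (hint 0 t)
      exact this.symm
    ext i j
    rw [Matrix.conjTranspose_apply, star_trivial, hent, hent]
    simp_rw [mul_comm]
  have hpsd : ∀ t : ℝ, 0 ≤ t →
      (∫ τ in (0:ℝ)..t, vecMulVec (φ τ) (φ τ)).PosSemidef := by
    intro t ht
    refine .of_dotProduct_mulVec_nonneg (hherm t) fun x => ?_
    simpa using hq x t ht
  have hposdef : ∀ t : ℝ, 0 ≤ t → (G t).PosDef := by
    intro t ht
    rw [hG t]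
    exact hF₀.inv.add_posSemidef (hpsd t ht)
  refine ⟨hposdef, ?_, ?_⟩
  · rw [hG 0, intervalIntegral.integral_same, add_zero,
      Matrix.nonsing_inv_nonsing_inv _ hF₀.det_pos.ne'.isUnit]
  · intro t ht
    have hGd : HasDerivWithinAt G (vecMulVec (φ t) (φ t)) (Set.Ici 0) t := by
      have h1 : HasDerivWithinAt
          (fun s => F₀⁻¹ + ∫ τ in (0:ℝ)..s, vecMulVec (φ τ) (φ τ))
          (vecMulVec (φ t) (φ t)) (Set.Ici 0) t :=
        ((hΦcont.integral_hasStrictDerivAt 0 t).hasDerivAt.hasDerivWithinAt).const_add _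
      exact h1.congr (fun s _ => hG s) (hG t)
    exact hasDerivWithinAt_iff_tendsto_slope.mpr
      (aux_slope_inverse G t _ (hposdef t ht).isUnit (hasDerivWithinAt_iff_tendsto_slope.mp hGd))
end

section
/- Let q ∈ ℕ, let φ : ℝ → (Fin q → ℝ) be continuous, and let F : ℝ → Matrix (Fin q) (Fin q) ℝ be invertible-valued such that the map t ↦ (F(t))⁻¹ has derivative Φ(t) at every t ∈ ℝ. Then for all real numbers s ≤ t, the matrix (F(t))⁻¹ − (F(s))⁻¹ is positive semidefinite. -/
open Matrix MeasureTheory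

attribute [local instance] Matrix.normedAddCommGroup Matrix.normedSpace

/-- Loewner-order monotonicity of the inverse covariance matrix of the LS
estimator without forgetting factor: since `d/dt F(t)⁻¹ = φ(t)φ(t)ᵀ ⪰ 0`, the
matrix `F(t)⁻¹ − F(s)⁻¹` is positive semidefinite whenever `s ≤ t`. -/
theorem inverse_covariance_monotone
    (q : ℕ) (φ : ℝ → Fin q → ℝ) (hφ : Continuous φ)
    (F : ℝ → Matrix (Fin q) (Fin q) ℝ)
    (hFinv : ∀ t : ℝ, IsUnit (F t))
    (hF : ∀ t : ℝ, HasDerivAt (fun s => (F s)⁻¹) (vecMulVec (φ t) (φ t)) t) :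
    ∀ s t : ℝ, s ≤ t → ((F t)⁻¹ - (F s)⁻¹).PosSemidef := by
  intro s t hst
  -- evaluation linear maps
  have hentry : ∀ (i j : Fin q) (u : ℝ),
      HasDerivAt (fun v => (F v)⁻¹ i j) (vecMulVec (φ u) (φ u) i j) u := by
    intro i j u
    let L : Matrix (Fin q) (Fin q) ℝ →ₗ[ℝ] ℝ :=
      { toFun := fun M => M i j
        map_add' := by intros; rfl
        map_smul' := by intros; rfl }
    exact (L.toContinuousLinearMap.hasFDerivAt).comp_hasDerivAt u (hF u)
  rw [Matrix.posSemidef_iff_dotProduct_mulVec]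
  constructor
  · -- Hermitian
    rw [Matrix.IsHermitian]
    ext i j
    simp only [conjTranspose_apply, star_trivial, Matrix.sub_apply]
    have hconst : ∀ u : ℝ,
        (fun v => (F v)⁻¹ i j - (F v)⁻¹ j i) u
          = (fun v => (F v)⁻¹ i j - (F v)⁻¹ j i) s := by
      intro u
      have hdiff : Differentiable ℝ (fun v => (F v)⁻¹ i j - (F v)⁻¹ j i) :=
        fun v => ((hentry i j v).sub (hentry j i v)).differentiableAt
      have hd0 : ∀ v, deriv (fun v => (F v)⁻¹ i j - (F v)⁻¹ j i) v = 0 := by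
        intro v
        have h := (hentry i j v).sub (hentry j i v)
        have hz : vecMulVec (φ v) (φ v) i j - vecMulVec (φ v) (φ v) j i = 0 := by
          simp [vecMulVec_apply, mul_comm]
        rw [hz] at h
        exact h.deriv
      exact is_const_of_deriv_eq_zero hdiff hd0 u s
    have := hconst t
    simp only at this
    linarith
  · intro x
    have hx : ∀ u : ℝ,
        HasDerivAt (fun v => star x ⬝ᵥ (F v)⁻¹ *ᵥ x)
          (star x ⬝ᵥ vecMulVec (φ u) (φ u) *ᵥ x) u := by
      intro u
      let L : Matrix (Fin q) (Fin q) ℝ →ₗ[ℝ] ℝ :=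
        { toFun := fun M => star x ⬝ᵥ M *ᵥ x
          map_add' := by
            intro M N
            simp [Matrix.add_mulVec, dotProduct_add]
          map_smul' := by
            intro c M
            simp [Matrix.smul_mulVec, dotProduct_smul] }
      exact (L.toContinuousLinearMap.hasFDerivAt).comp_hasDerivAt u (hF u)
    have hmono : Monotone (fun v => star x ⬝ᵥ (F v)⁻¹ *ᵥ x) := by
      apply monotone_of_deriv_nonneg
      · exact fun v => ((hx v).differentiableAt)
      · intro v
        rw [(hx v).deriv]
        have hq : star x ⬝ᵥ vecMulVec (φ v) (φ v) *ᵥ x = (φ v ⬝ᵥ x) * (φ v ⬝ᵥ x) := by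
          simp [dotProduct, Matrix.mulVec, Matrix.vecMulVec_apply, Finset.sum_mul,
            Finset.mul_sum]
          apply Finset.sum_congr rfl
          intro a _
          apply Finset.sum_congr rfl
          intro b _
          ring
        rw [hq]
        exact mul_self_nonneg _
    have := hmono hst
    have hsub : star x ⬝ᵥ ((F t)⁻¹ - (F s)⁻¹) *ᵥ x
        = star x ⬝ᵥ (F t)⁻¹ *ᵥ x - star x ⬝ᵥ (F s)⁻¹ *ᵥ x := by
      rw [Matrix.sub_mulVec, dotProduct_sub]
    rw [hsub]
    linarith [this]
end
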